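/- Let (G,C) be a circuit graph, let u,v ∈ V(C) be distinct and let e ∈ E(C) be such that u, e, v occur on C in clockwise order. Let (G₁,G₂) be a 2-separation of G with V(G₁ ∩ G₂) = {x,y}, where x ∈ V(eCv), y ∈ V(uCe), {u,v} ⊆ V(G₁), e ∈ E(G₂), xCy ⊆ G₁ and yCx ⊆ G₂. Let G₁' = G₁ + xy be the plane graph with outer cycle C₁ = xCy + yx, let G₂' = G₂ + xy be the plane graph with outer cycle C₂ = yCx + xy, and set e₁ = xy ∈ E(C₁). Then τ_{G₁'}(e₁v) + τ_{G₂'}(ex) ≤ τ_G(ev) + 2/3 and τ_{G₁'}(ue₁) + τ_{G₂'}(ye) ≤ τ_G(ue) + 2/3. -/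

import Mathlib

/-!
A 2-separation of `G₁ + xy` lifts to a 2-separation of `G` with the same cut: drop the added
edge `xy` and glue `G₂` onto the side that contained `xy`, which is possible because `G₂`
meets `G₁` only in `x` and `y`. So a segment of `C₁` that is not good is not good in `C`
either, and likewise for `C₂`. Now `eCv` is the concatenation of `eC₂x` and `xC₁v`, and
`uCe` that of `uC₁y` and `yC₂e`: if the segment of `C` is not good then `τ_G = 2/3` while
each term on the left is at most `2/3`; if it is good, so are both pieces, and the values
of `τ` depend only on the lengths of the segments, which add up.
-/

open scoped Classical

namespace Paper

/-- An arc in the plane from `a` to `b`: a homeomorphic image of `[0,1]`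
with endpoints `a` and `b`. -/
def IsArc (A : Set (ℝ × ℝ)) (a b : ℝ × ℝ) : Prop :=
  ∃ f : ℝ → ℝ × ℝ, ContinuousOn f (Set.Icc 0 1) ∧ Set.InjOn f (Set.Icc 0 1) ∧
    f '' Set.Icc 0 1 = A ∧ f 0 = a ∧ f 1 = b

/-- A drawing of the graph `G` in the plane without crossings: vertices are mapped to
distinct points, each edge to an arc joining the images of its ends, arcs pass through
no vertex points other than their ends, and two distinct arcs meet only in images of
common end-vertices. -/
structure PlaneEmbedding {V : Type} (G : SimpleGraph V) where
  vmap : V → ℝ × ℝ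
  vinj : Function.Injective vmap
  arc : Sym2 V → Set (ℝ × ℝ)
  arc_spec : ∀ u v : V, G.Adj u v → IsArc (arc s(u, v)) (vmap u) (vmap v)
  arc_vertex : ∀ e ∈ G.edgeSet, ∀ w : V, vmap w ∈ arc e → w ∈ e
  arc_meet : ∀ e ∈ G.edgeSet, ∀ e' ∈ G.edgeSet, e ≠ e' →
    arc e ∩ arc e' ⊆ {p | ∃ w : V, w ∈ e ∧ w ∈ e' ∧ p = vmap w}

/-- The point set of a plane drawing. -/
def PlaneEmbedding.image {V : Type} {G : SimpleGraph V} (E : PlaneEmbedding G) :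
    Set (ℝ × ℝ) :=
  Set.range E.vmap ∪ ⋃ e ∈ G.edgeSet, E.arc e

/-- A graph is planar if it admits a plane drawing. -/
def IsPlanar {V : Type} (G : SimpleGraph V) : Prop := Nonempty (PlaneEmbedding G)

/-- `G` is `k`-connected: more than `k` vertices, and deleting fewer than `k`
vertices leaves a connected graph. -/
def IsKConnected {V : Type} [Fintype V] (k : ℕ) (G : SimpleGraph V) : Prop :=
  k < Fintype.card V ∧ ∀ S : Set V, S.ncard < k → (G.induce Sᶜ).Connected

/-- `G` is essentially 4-connected: it is connected and for every `S ⊆ V(G)` with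
`|S| < 4`, `G − S` is connected or has exactly two components, one of which
has exactly one vertex. -/
def EssFourConnected {V : Type} [Fintype V] (G : SimpleGraph V) : Prop :=
  G.Connected ∧ ∀ S : Set V, S.ncard < 4 →
    (G.induce Sᶜ).Connected ∨
      ∃ c₁ c₂ : (G.induce Sᶜ).ConnectedComponent, c₁ ≠ c₂ ∧
        (∀ c : (G.induce Sᶜ).ConnectedComponent, c = c₁ ∨ c = c₂) ∧
        (c₁.supp.ncard = 1 ∨ c₂.supp.ncard = 1)

/-- `S` is the vertex set of a connected component of `G − W`. -/
def IsCompOfComplement {V : Type} (G : SimpleGraph V) (W S : Set V) : Prop :=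
  S.Nonempty ∧ Disjoint S W ∧ (G.induce S).Connected ∧
    ∀ u ∈ S, ∀ v : V, v ∉ W → G.Adj u v → v ∈ S

/-- The subgraph of `G` induced by the edges of `G` incident with at least one vertex
of `S`. -/
def bridgeOf {V : Type} (G : SimpleGraph V) (S : Set V) : G.Subgraph where
  verts := S ∪ {v | ∃ u ∈ S, G.Adj u v}
  Adj a b := G.Adj a b ∧ (a ∈ S ∨ b ∈ S)
  adj_sub h := h.1
  edge_vert := by
    rintro a b ⟨hab, ha | hb⟩
    · exact Or.inl ha
    · exact Or.inr ⟨b, hb, hab.symm⟩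
  symm := ⟨by rintro a b ⟨hab, h⟩; exact ⟨hab.symm, h.symm⟩⟩

/-- `B` is an `H`-bridge of `G`: either `B` is induced by a single edge of
`E(G) ∖ E(H)` with both ends in `V(H)`, or `B` is induced by the edges of `G`
incident with at least one vertex of a single component of `G − H`. -/
def IsBridge {V : Type} (G : SimpleGraph V) (H B : G.Subgraph) : Prop :=
  (∃ (u v : V) (h : G.Adj u v), ¬ H.Adj u v ∧ u ∈ H.verts ∧ v ∈ H.verts ∧
      B = G.subgraphOfAdj h) ∨
    (∃ S : Set V, IsCompOfComplement G H.verts S ∧ B = bridgeOf G S)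

/-- `b_G(H)`: the number of `H`-bridges of `G` with at least 3 vertices. -/
noncomputable def numBigBridges {V : Type} (G : SimpleGraph V) (H : G.Subgraph) : ℕ :=
  Set.ncard {B : G.Subgraph | IsBridge G H B ∧ 3 ≤ B.verts.ncard}

/-- `H` is a Tutte subgraph of `G`: every `H`-bridge has at most three attachments. -/
def IsTutteSubgraph {V : Type} (G : SimpleGraph V) (H : G.Subgraph) : Prop :=
  ∀ B : G.Subgraph, IsBridge G H B → (B.verts ∩ H.verts).ncard ≤ 3

/-- `H` is an `F`-Tutte subgraph of `G` (`F` given by its edge set): `H` is a Tutte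
subgraph and every `H`-bridge containing an edge of `F` has at most two attachments. -/
def IsTutteSubgraphWrt {V : Type} (G : SimpleGraph V) (F : Set (Sym2 V))
    (H : G.Subgraph) : Prop :=
  IsTutteSubgraph G H ∧
    ∀ B : G.Subgraph, IsBridge G H B → (∃ e ∈ F, e ∈ B.edgeSet) →
      (B.verts ∩ H.verts).ncard ≤ 2

/-- The circumference of `G`: the length of a longest cycle. -/
noncomputable def circumference {V : Type} (G : SimpleGraph V) : ℕ :=
  sSup {k : ℕ | ∃ (r : V) (Q : G.Walk r r), Q.IsCycle ∧ Q.length = k}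

/-- A cycle in `G` given with an orientation (referred to as the clockwise
orientation), presented as an injective cyclic enumeration `f : ZMod m → V`
of its vertices with consecutive vertices adjacent. -/
structure OrientedCycle {V : Type} (G : SimpleGraph V) (m : ℕ) where
  f : ZMod m → V
  inj : Function.Injective f
  adj : ∀ i : ZMod m, G.Adj (f i) (f (i + 1))
  three_le : 3 ≤ m

/-- The vertex set of an oriented cycle. -/
def OrientedCycle.vertexSet {V : Type} {G : SimpleGraph V} {m : ℕ}
    (C : OrientedCycle G m) : Set V := Set.range C.f

/-- The edge set of an oriented cycle. -/
def OrientedCycle.edgeSet {V : Type} {G : SimpleGraph V} {m : ℕ}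
    (C : OrientedCycle G m) : Set (Sym2 V) :=
  {e | ∃ i : ZMod m, e = s(C.f i, C.f (i + 1))}

/-- `C` is the outer cycle of the drawing `E` of `G`: the drawing of `C` is the
frontier of the unbounded face (the unbounded connected component of the complement
of the drawing). -/
def OrientedCycle.IsOuterCycleOf {V : Type} {G : SimpleGraph V} {m : ℕ}
    (C : OrientedCycle G m) (E : PlaneEmbedding G) : Prop :=
  ∃ p : ℝ × ℝ, p ∉ E.image ∧
    ¬ Bornology.IsBounded (connectedComponentIn E.imageᶜ p) ∧
    frontier (connectedComponentIn E.imageᶜ p) =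
      ⋃ i : ZMod m, E.arc s(C.f i, C.f (i + 1))

/-- A `k`-separation of `G`: a pair of edge-disjoint subgraphs covering `G`, neither
contained in the other, whose vertex sets share exactly `k` vertices. -/
def IsKSeparation {V : Type} (G : SimpleGraph V) (k : ℕ) (G₁ G₂ : G.Subgraph) : Prop :=
  G₁ ⊔ G₂ = ⊤ ∧ Disjoint G₁.edgeSet G₂.edgeSet ∧
    (G₁.verts ∩ G₂.verts).ncard = k ∧ ¬ G₁ ≤ G₂ ∧ ¬ G₂ ≤ G₁

/-- A `k`-cut of `G`. -/
def IsKCut {V : Type} (G : SimpleGraph V) (k : ℕ) (T : Set V) : Prop :=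
  T.ncard = k ∧ ∃ G₁ G₂ : G.Subgraph, IsKSeparation G k G₁ G₂ ∧
    G₁.verts ∩ G₂.verts = T ∧ (G₁.verts \ G₂.verts).Nonempty ∧
    (G₂.verts \ G₁.verts).Nonempty

/-- `(G, C)` is a circuit graph: `G` is 2-connected, can be drawn in the plane with
outer cycle `C`, and every component of `G − T`, for every 2-cut `T`, contains a
vertex of `C`. -/
def IsCircuitGraph {V : Type} [Fintype V] (G : SimpleGraph V) {m : ℕ}
    (C : OrientedCycle G m) : Prop :=
  IsKConnected 2 G ∧ (∃ E : PlaneEmbedding G, C.IsOuterCycleOf E) ∧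
    ∀ T : Set V, IsKCut G 2 T → ∀ S : Set V, IsCompOfComplement G T S →
      ∃ i : ZMod m, C.f i ∈ S

/-- The clockwise segment of `C` from `C.f p` to `C.f q` (indices `p ≤ q` in `ℕ`,
taken mod `m`) is good: there is no 2-separation `(G₁,G₂)` of `G` with
`V(G₁ ∩ G₂) = {s,t}`, where `s = C.f i`, `t = C.f j` with `p ≤ i ≤ j ≤ q`,
the segment from `s` to `t` contained in `G₂`, and `|V(G₂)| ≥ 3`. -/
def SegGood {V : Type} {m : ℕ} (G : SimpleGraph V) (C : OrientedCycle G m)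
    (p q : ℕ) : Prop :=
  ¬ ∃ (G₁ G₂ : G.Subgraph) (i j : ℕ), IsKSeparation G 2 G₁ G₂ ∧
      p ≤ i ∧ i ≤ j ∧ j ≤ q ∧
      G₁.verts ∩ G₂.verts = {C.f (i : ZMod m), C.f (j : ZMod m)} ∧
      (∀ k : ℕ, i ≤ k → k ≤ j → C.f (k : ZMod m) ∈ G₂.verts) ∧
      (∀ k : ℕ, i ≤ k → k < j → G₂.Adj (C.f (k : ZMod m)) (C.f ((k : ZMod m) + 1))) ∧
      3 ≤ G₂.verts.ncard

/-- `τ_G(xy)` for `x`, `y` both vertices of `C` (`x = C.f p`, `y = C.f q`, `p ≤ q`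
as natural numbers indexing clockwise): `2/3` if `xCy` is not good, `0` otherwise. -/
noncomputable def tauVV {V : Type} {m : ℕ} (G : SimpleGraph V) (C : OrientedCycle G m)
    (p q : ℕ) : ℚ :=
  if SegGood G C p q then 0 else 2/3

/-- `τ_G(xy)` where exactly one of `x, y` is an edge of `C`; the underlying vertex
segment runs clockwise from `C.f p` to `C.f q` (`p ≤ q` as naturals), and the edge
of the pair is the edge of `C` attached at the appropriate end of this segment
(so `x` and `y` are incident iff `p = q`, and `|V(xCy)| = 2` iff `q = p + 1`):
`2/3` if the segment is not good; otherwise `2/3` if `x` and `y` are incident;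
otherwise `1/3` if the segment has exactly two vertices; and `0` otherwise. -/
noncomputable def tauVE {V : Type} {m : ℕ} (G : SimpleGraph V) (C : OrientedCycle G m)
    (p q : ℕ) : ℚ :=
  if ¬ SegGood G C p q then 2/3
  else if p = q then 2/3
  else if q = p + 1 then 1/3
  else 0

end Paper

namespace Paper

section Development

variable {V : Type} {G : SimpleGraph V}

theorem IsKSeparation.symm {k : ℕ} {G₁ G₂ : G.Subgraph} (h : IsKSeparation G k G₁ G₂) :
    IsKSeparation G k G₂ G₁ := by
  obtain ⟨hsup, hdisj, hcard, h₁₂, h₂₁⟩ := h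
  exact ⟨by rwa [sup_comm], hdisj.symm, by rwa [Set.inter_comm], h₂₁, h₁₂⟩

theorem IsKSeparation.adj_right_of_not_adj_left {k : ℕ} {G₁ G₂ : G.Subgraph}
    (h : IsKSeparation G k G₁ G₂) {u v : V} (huv : G.Adj u v) (h₁ : ¬ G₁.Adj u v) :
    G₂.Adj u v := by
  have : (G₁ ⊔ G₂).Adj u v := h.1 ▸ SimpleGraph.Subgraph.top_adj.mpr huv
  exact this.resolve_left h₁

section Lift

variable {Ga : G.Subgraph} {A : SimpleGraph Ga.verts}

def liftSubgraph (H : A.Subgraph) : G.Subgraph where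
  verts := Subtype.val '' H.verts
  Adj u v := ∃ (hu : u ∈ Ga.verts) (hv : v ∈ Ga.verts), Ga.Adj u v ∧ H.Adj ⟨u, hu⟩ ⟨v, hv⟩
  adj_sub := by rintro u v ⟨-, -, h, -⟩; exact Ga.adj_sub h
  edge_vert := by rintro u v ⟨hu, _, _, h⟩; exact ⟨⟨u, hu⟩, h.fst_mem, rfl⟩
  symm := ⟨by rintro u v ⟨hu, hv, h, h'⟩; exact ⟨hv, hu, h.symm, h'.symm⟩⟩

theorem liftSubgraph_adj_iff {H : A.Subgraph} {u v : Ga.verts} :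
    (liftSubgraph H).Adj u v ↔ Ga.Adj u v ∧ H.Adj u v :=
  ⟨fun ⟨_, _, h, h'⟩ => ⟨h, h'⟩, fun ⟨h, h'⟩ => ⟨u.2, v.2, h, h'⟩⟩

theorem mem_liftSubgraph_verts {H : A.Subgraph} {w : Ga.verts} :
    (w : V) ∈ (liftSubgraph H).verts ↔ w ∈ H.verts :=
  Subtype.val_injective.mem_set_image

theorem liftSubgraph_le (H : A.Subgraph) : liftSubgraph H ≤ Ga :=
  ⟨by rintro _ ⟨w, -, rfl⟩; exact w.2, by rintro u v ⟨-, -, h, -⟩; exact h⟩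

theorem liftSubgraph_sup_liftSubgraph (hA : Ga.coe ≤ A) {H₁ H₂ : A.Subgraph}
    (h : H₁ ⊔ H₂ = ⊤) : liftSubgraph H₁ ⊔ liftSubgraph H₂ = Ga := by
  refine le_antisymm (sup_le (liftSubgraph_le _) (liftSubgraph_le _)) ⟨fun w hw => ?_, ?_⟩
  · have : (⟨w, hw⟩ : Ga.verts) ∈ (H₁ ⊔ H₂).verts := h ▸ trivial
    rcases this with h₁ | h₂
    · exact Or.inl ⟨_, h₁, rfl⟩
    · exact Or.inr ⟨_, h₂, rfl⟩
  · intro u v huv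
    have : (H₁ ⊔ H₂).Adj ⟨u, huv.fst_mem⟩ ⟨v, huv.snd_mem⟩ := h ▸ hA huv
    rcases this with h₁ | h₂
    · exact Or.inl ⟨_, _, huv, h₁⟩
    · exact Or.inr ⟨_, _, huv, h₂⟩

theorem disjoint_edgeSet_liftSubgraph {H₁ H₂ : A.Subgraph}
    (h : Disjoint H₁.edgeSet H₂.edgeSet) :
    Disjoint (liftSubgraph H₁).edgeSet (liftSubgraph H₂).edgeSet := by
  rw [Set.disjoint_left]
  intro e
  induction e using Sym2.ind with
  | _ u v =>
    rintro ⟨_, _, _, h₁⟩ ⟨_, _, _, h₂⟩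
    exact Set.disjoint_left.mp h (H₁.mem_edgeSet.mpr h₁) (H₂.mem_edgeSet.mpr h₂)

theorem le_of_liftSubgraph_le_sup {Gb : G.Subgraph} {H₁ H₂ : A.Subgraph}
    (hdisj : Disjoint Ga.edgeSet Gb.edgeSet)
    (hverts : ∀ w : Ga.verts, (w : V) ∈ Gb.verts → w ∈ H₁.verts)
    (hadj : ∀ u v, H₂.Adj u v → ¬ Ga.Adj u v → H₁.Adj u v)
    (h : liftSubgraph H₂ ≤ liftSubgraph H₁ ⊔ Gb) : H₂ ≤ H₁ := by
  refine ⟨fun w hw => ?_, fun u v huv => ?_⟩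
  · rcases h.1 (mem_liftSubgraph_verts.mpr hw) with h₁ | h₂
    · exact mem_liftSubgraph_verts.mp h₁
    · exact hverts w h₂
  · by_cases hGa : Ga.Adj u v
    · rcases h.2 (liftSubgraph_adj_iff.mpr ⟨hGa, huv⟩) with h₁ | h₂
      · exact (liftSubgraph_adj_iff.mp h₁).2
      · exact absurd (Gb.mem_edgeSet.mpr h₂) (Set.disjoint_left.mp hdisj (Ga.mem_edgeSet.mpr hGa))
    · exact hadj u v huv hGa

end Lift

-- The paper's `H + xy`; no edge is added unless `x ≠ y` and both lie in `V(H)`.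
abbrev _root_.SimpleGraph.Subgraph.withEdge (H : G.Subgraph) (x y : V) : SimpleGraph H.verts :=
  H.coe ⊔ SimpleGraph.fromEdgeSet {e | Sym2.map Subtype.val e = s(x, y)}

section WithEdge

variable {Ga Gb : G.Subgraph} {x y : V}

theorem withEdge_adj_of_not_adj {u v : Ga.verts} (h : (Ga.withEdge x y).Adj u v)
    (hn : ¬ Ga.Adj u v) : s((u : V), v) = s(x, y) := by
  rcases h with h | h
  · exact absurd h hn
  · exact h.1

theorem withEdge_adj_self (hx : x ∈ Ga.verts) (hy : y ∈ Ga.verts) (hxy : x ≠ y) :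
    (Ga.withEdge x y).Adj ⟨x, hx⟩ ⟨y, hy⟩ :=
  Or.inr ⟨rfl, fun h => hxy congr($h.1)⟩

theorem adj_of_sym2_coe_eq {H : (Ga.withEdge x y).Subgraph} {u v : Ga.verts}
    (huv : s((u : V), v) = s(x, y)) (hx : x ∈ Ga.verts) (hy : y ∈ Ga.verts)
    (hxy : H.Adj ⟨x, hx⟩ ⟨y, hy⟩) : H.Adj u v := by
  have : s(u, v) = s(⟨x, hx⟩, ⟨y, hy⟩) :=
    Sym2.map.injective Subtype.val_injective huv
  exact H.mem_edgeSet.mp (this ▸ H.mem_edgeSet.mpr hxy)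

-- `Gb` meets `Ga` only in `x` and `y`, which lie in `H₁` together with the edge `xy`.
theorem isKSeparation_liftSubgraph_sup (hsep : IsKSeparation G 2 Ga Gb)
    (hcut : Ga.verts ∩ Gb.verts = {x, y}) {H₁ H₂ : (Ga.withEdge x y).Subgraph}
    (hH : IsKSeparation _ 2 H₁ H₂) (hx : x ∈ Ga.verts) (hy : y ∈ Ga.verts)
    (hxy : H₁.Adj ⟨x, hx⟩ ⟨y, hy⟩) :
    IsKSeparation G 2 (liftSubgraph H₁ ⊔ Gb) (liftSubgraph H₂) ∧
      (liftSubgraph H₁ ⊔ Gb).verts ∩ (liftSubgraph H₂).verts =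
        Subtype.val '' (H₁.verts ∩ H₂.verts) := by
  obtain ⟨hsup, hdisj, -, -, hGb⟩ := hsep
  obtain ⟨hHsup, hHdisj, hHcard, -, hH₂⟩ := hH
  have hattach (w : Ga.verts) (hw : (w : V) ∈ Gb.verts) : w ∈ H₁.verts := by
    have : (w : V) ∈ ({x, y} : Set V) := hcut ▸ ⟨w.2, hw⟩
    rcases this with h | h
    · exact (Subtype.ext h : w = ⟨x, hx⟩) ▸ hxy.fst_mem
    · exact (Subtype.ext h : w = ⟨y, hy⟩) ▸ hxy.snd_mem
  have hcutL : (liftSubgraph H₁ ⊔ Gb).verts ∩ (liftSubgraph H₂).verts =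
      Subtype.val '' (H₁.verts ∩ H₂.verts) := by
    rw [Set.image_inter Subtype.val_injective, SimpleGraph.Subgraph.verts_sup,
      Set.union_inter_distrib_right]
    refine Set.union_eq_left.mpr ?_
    rintro _ ⟨hzb, w, hw, rfl⟩
    exact ⟨mem_liftSubgraph_verts.mpr (hattach w hzb), w, hw, rfl⟩
  refine ⟨⟨?_, ?_, ?_, ?_, ?_⟩, hcutL⟩
  · rw [sup_right_comm, liftSubgraph_sup_liftSubgraph le_sup_left hHsup, hsup]
  · rw [SimpleGraph.Subgraph.edgeSet_sup]
    exact Set.disjoint_union_left.mpr ⟨disjoint_edgeSet_liftSubgraph hHdisj,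
      (hdisj.mono_left (SimpleGraph.Subgraph.edgeSet_mono (liftSubgraph_le H₂))).symm⟩
  · rw [hcutL, Set.ncard_image_of_injective _ Subtype.val_injective, hHcard]
  · exact fun h => hGb ((le_sup_right.trans h).trans (liftSubgraph_le H₂))
  · refine fun h => hH₂ (le_of_liftSubgraph_le_sup hdisj hattach (fun u v huv hn => ?_) h)
    exact adj_of_sym2_coe_eq (withEdge_adj_of_not_adj (H₂.adj_sub huv) hn) hx hy hxy

-- Glue `Gb` onto the side containing the edge `xy`.
theorem exists_isKSeparation_of_withEdge (hsep : IsKSeparation G 2 Ga Gb)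
    (hcut : Ga.verts ∩ Gb.verts = {x, y}) {H₁ H₂ : (Ga.withEdge x y).Subgraph}
    (hH : IsKSeparation _ 2 H₁ H₂) :
    ∃ K₁ K₂ : G.Subgraph, IsKSeparation G 2 K₁ K₂ ∧
      K₁.verts ∩ K₂.verts = Subtype.val '' (H₁.verts ∩ H₂.verts) ∧
      Subtype.val '' H₂.verts ⊆ K₂.verts ∧
      ∀ u v : Ga.verts, G.Adj u v → H₂.Adj u v → K₂.Adj u v := by
  obtain ⟨⟨hx, -⟩, hy, -⟩ : x ∈ Ga.verts ∩ Gb.verts ∧ y ∈ Ga.verts ∩ Gb.verts := by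
    simp only [hcut, Set.mem_insert_iff, Set.mem_singleton_iff, true_or, or_true, and_self]
  have hne : x ≠ y := by
    rintro rfl
    have := hsep.2.2.1
    rw [hcut, Set.pair_eq_singleton, Set.ncard_singleton] at this
    omega
  have hxy : (H₁ ⊔ H₂).Adj ⟨x, hx⟩ ⟨y, hy⟩ := hH.1 ▸ withEdge_adj_self hx hy hne
  rcases hxy with hxy | hxy
  · obtain ⟨hK, hcutK⟩ := isKSeparation_liftSubgraph_sup hsep hcut hH hx hy hxy
    refine ⟨_, _, hK, hcutK, subset_rfl, fun u v _ huv => ?_⟩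
    refine liftSubgraph_adj_iff.mpr ⟨by_contra fun hn => ?_, huv⟩
    have h₁ : H₁.Adj u v :=
      adj_of_sym2_coe_eq (withEdge_adj_of_not_adj (H₂.adj_sub huv) hn) hx hy hxy
    exact Set.disjoint_left.mp hH.2.1 (H₁.mem_edgeSet.mpr h₁) (H₂.mem_edgeSet.mpr huv)
  · obtain ⟨hK, hcutK⟩ := isKSeparation_liftSubgraph_sup hsep hcut hH.symm hx hy hxy
    refine ⟨_, _, hK.symm, by rw [Set.inter_comm, hcutK, Set.inter_comm],
      Set.subset_union_left, fun u v huv huv₂ => ?_⟩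
    by_cases hGa : Ga.Adj u v
    · exact Or.inl (liftSubgraph_adj_iff.mpr ⟨hGa, huv₂⟩)
    · exact Or.inr (hsep.adj_right_of_not_adj_left huv hGa)

end WithEdge

section Segment

variable {m : ℕ}

-- Segments start at an index in `ZMod m`, so they may run past `C.f 0`.
def IsBadSegment (C : OrientedCycle G m) (s : ZMod m) (ℓ : ℕ) : Prop :=
  ∃ G₁ G₂ : G.Subgraph, IsKSeparation G 2 G₁ G₂ ∧
    G₁.verts ∩ G₂.verts = {C.f s, C.f (s + ℓ)} ∧
    (∀ k ≤ ℓ, C.f (s + k) ∈ G₂.verts) ∧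
    (∀ k < ℓ, G₂.Adj (C.f (s + k)) (C.f (s + k + 1))) ∧
    3 ≤ G₂.verts.ncard

theorem segGood_iff {C : OrientedCycle G m} {p q : ℕ} :
    SegGood G C p q ↔ ∀ i ℓ : ℕ, p ≤ i → i + ℓ ≤ q → ¬ IsBadSegment C i ℓ := by
  constructor
  · rintro hgood i ℓ hi hq ⟨G₁, G₂, hsep, hcut, hv, he, hcard⟩
    refine hgood ⟨G₁, G₂, i, i + ℓ, hsep, hi, Nat.le_add_right i ℓ, hq, by rwa [Nat.cast_add],
      fun k hik hki => ?_, fun k hik hki => ?_, hcard⟩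
    · obtain ⟨c, rfl⟩ := Nat.exists_eq_add_of_le hik
      simpa only [Nat.cast_add] using hv c (by omega)
    · obtain ⟨c, rfl⟩ := Nat.exists_eq_add_of_le hik
      simpa only [Nat.cast_add] using he c (by omega)
  · rintro h ⟨G₁, G₂, i, j, hsep, hi, hij, hj, hcut, hv, he, hcard⟩
    obtain ⟨ℓ, rfl⟩ := Nat.exists_eq_add_of_le hij
    refine h i ℓ hi hj ⟨G₁, G₂, hsep, by rwa [← Nat.cast_add], fun k hk => ?_, fun k hk => ?_,
      hcard⟩
    · simpa only [Nat.cast_add] using hv (i + k) (by omega) (by omega)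
    · simpa only [Nat.cast_add] using he (i + k) (by omega) (by omega)

variable [Finite V] {C : OrientedCycle G m} {Ga Gb : G.Subgraph} {x y : V}

theorem IsBadSegment.of_withEdge (hsep : IsKSeparation G 2 Ga Gb)
    (hcut : Ga.verts ∩ Gb.verts = {x, y}) {n : ℕ} {D : OrientedCycle (Ga.withEdge x y) n}
    {s : ZMod n} {t : ZMod m} {ℓ : ℕ} (hDC : ∀ k ≤ ℓ, (D.f (s + k) : V) = C.f (t + k))
    (hbad : IsBadSegment D s ℓ) : IsBadSegment C t ℓ := by
  obtain ⟨H₁, H₂, hH, hcutH, hv, he, hcard⟩ := hbad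
  obtain ⟨K₁, K₂, hK, hcutK, hverts, hadj⟩ := exists_isKSeparation_of_withEdge hsep hcut hH
  refine ⟨K₁, K₂, hK, ?_, fun k hk => ?_, fun k hk => ?_, ?_⟩
  · have h₀ := hDC 0 (Nat.zero_le ℓ)
    simp only [Nat.cast_zero, add_zero] at h₀
    rw [hcutK, hcutH, Set.image_pair, h₀, hDC ℓ le_rfl]
  · exact hDC k hk ▸ hverts ⟨_, hv k hk, rfl⟩
  · have e₀ := hDC k hk.le
    have e₁ : (D.f (s + k + 1) : V) = C.f (t + k + 1) := by
      simpa only [Nat.cast_succ, add_assoc] using hDC (k + 1) hk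
    rw [← e₀, ← e₁]
    exact hadj _ _ (by rw [e₀, e₁]; exact C.adj _) (he k hk)
  · rw [← Set.ncard_image_of_injective _ Subtype.val_injective] at hcard
    exact hcard.trans (Set.ncard_le_ncard hverts)

-- The `D`-indices `P, …, Q` correspond to the `C`-indices `d, …, d + (Q - P)` modulo `m`.
theorem segGood_withEdge_of_segGood (hsep : IsKSeparation G 2 Ga Gb)
    (hcut : Ga.verts ∩ Gb.verts = {x, y}) {n : ℕ} (D : OrientedCycle (Ga.withEdge x y) n)
    (o : ℕ) (hD : ∀ ι : ZMod n, (D.f ι : V) = C.f ((o + ι.val : ℕ) : ZMod m))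
    {P Q P' Q' d : ℕ} (hQ : Q < n) (hd : (d : ZMod m) = ((o + P : ℕ) : ZMod m))
    (hP' : P' ≤ d) (hQ' : d + (Q - P) ≤ Q') (hgood : SegGood G C P' Q') :
    SegGood _ D P Q := by
  rw [segGood_iff] at hgood ⊢
  intro i ℓ hi hiℓ hbad
  obtain ⟨c, rfl⟩ := Nat.exists_eq_add_of_le hi
  refine hgood (d + c) ℓ (by omega) (by omega) (hbad.of_withEdge hsep hcut fun k hk => ?_)
  rw [← Nat.cast_add, hD, ZMod.val_natCast_of_lt (by omega)]
  congr 1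
  push_cast at hd ⊢
  rw [hd]
  ring

end Segment

theorem tauVE_le_two_thirds {m : ℕ} (C : OrientedCycle G m) (p q : ℕ) : tauVE G C p q ≤ 2/3 := by
  unfold tauVE
  split_ifs <;> norm_num

theorem tauVE_add_tauVE_le {V₁ V₂ : Type} {G₁ : SimpleGraph V₁} {G₂ : SimpleGraph V₂}
    {m m₁ m₂ : ℕ} {C : OrientedCycle G m} {C₁ : OrientedCycle G₁ m₁} {C₂ : OrientedCycle G₂ m₂}
    {P Q P₁ Q₁ P₂ Q₂ : ℕ} (h₁ : SegGood G C P Q → SegGood G₁ C₁ P₁ Q₁)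
    (h₂ : SegGood G C P Q → SegGood G₂ C₂ P₂ Q₂) (hP₁ : P₁ ≤ Q₁) (hP₂ : P₂ ≤ Q₂)
    (hQ : Q + P₁ + P₂ = P + Q₁ + Q₂) :
    tauVE G₁ C₁ P₁ Q₁ + tauVE G₂ C₂ P₂ Q₂ ≤ tauVE G C P Q + 2/3 := by
  by_cases hgood : SegGood G C P Q
  · simp only [tauVE, hgood, h₁ hgood, h₂ hgood, not_true_eq_false, if_false]
    split_ifs <;> first | omega | norm_num
  · have : tauVE G C P Q = 2/3 := if_pos hgood
    linarith [tauVE_le_two_thirds C₁ P₁ Q₁, tauVE_le_two_thirds C₂ P₂ Q₂]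

end Development

/-- Indices on `C`: `u = C.f 0`, `e = s(C.f a, C.f (a + 1))`, `v = C.f b`, `x = C.f p` and
`y = C.f r`. The cycle `C₁` traces `C.f p, …, C.f (m + r)` and `C₂` traces `C.f r, …, C.f p`,
each closed by the edge `xy`. -/
theorem tau_inequalities_of_two_separation_general
    {V : Type} [Fintype V] (G : SimpleGraph V)
    {m : ℕ} (C : OrientedCycle G m)
    (a b : ℕ) (hbm : b < m)
    (p r : ℕ) (hp₁ : a + 1 ≤ p) (hp₂ : p ≤ b) (hr : r ≤ a)
    (G₁ G₂ : G.Subgraph) (hsep : IsKSeparation G 2 G₁ G₂)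
    (hxy : G₁.verts ∩ G₂.verts = {C.f (p : ZMod m), C.f (r : ZMod m)}) :
    ∀ C₁ : OrientedCycle
        (G₁.coe ⊔ SimpleGraph.fromEdgeSet
          {e' : Sym2 G₁.verts |
            Sym2.map (Subtype.val) e' = s(C.f (p : ZMod m), C.f (r : ZMod m))})
        (m - p + r + 1),
      (∀ i : ZMod (m - p + r + 1), ((C₁.f i : V) = C.f ((p + i.val : ℕ) : ZMod m))) →
    ∀ C₂ : OrientedCycle
        (G₂.coe ⊔ SimpleGraph.fromEdgeSet
          {e' : Sym2 G₂.verts |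
            Sym2.map (Subtype.val) e' = s(C.f (p : ZMod m), C.f (r : ZMod m))})
        (p - r + 1),
      (∀ i : ZMod (p - r + 1), ((C₂.f i : V) = C.f ((r + i.val : ℕ) : ZMod m))) →
      tauVE _ C₁ 0 (b - p) + tauVE _ C₂ (a - r + 1) (p - r)
          ≤ tauVE G C (a + 1) b + 2/3 ∧
      tauVE _ C₁ (m - p) (m - p + r) + tauVE _ C₂ 0 (a - r)
          ≤ tauVE G C 0 a + 2/3 := by
  intro C₁ hC₁ C₂ hC₂
  have hyx : G₂.verts ∩ G₁.verts = {C.f (p : ZMod m), C.f (r : ZMod m)} := by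
    rwa [Set.inter_comm]
  constructor
  · exact tauVE_add_tauVE_le
      (segGood_withEdge_of_segGood hsep hxy C₁ p hC₁ (d := p) (by omega) rfl hp₁ (by omega))
      (segGood_withEdge_of_segGood hsep.symm hyx C₂ r hC₂ (d := a + 1) (by omega)
        (by congr 1; omega) le_rfl (by omega))
      (by omega) (by omega) (by omega)
  · exact tauVE_add_tauVE_le
      (segGood_withEdge_of_segGood hsep hxy C₁ p hC₁ (d := 0) (by omega)
        (by rw [Nat.add_sub_cancel' (by omega), ZMod.natCast_self, Nat.cast_zero]) le_rfl
        (by omega))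
      (segGood_withEdge_of_segGood hsep.symm hyx C₂ r hC₂ (d := r) (by omega) rfl
        (Nat.zero_le r) (by omega))
      (by omega) (by omega) (by omega)

/-- The `τ` inequalities for a split along a 2-separation (from the proof of
Lemma 3.1).  Let `(G, C)` be a circuit graph, `u, v ∈ V(C)` distinct and
`e ∈ E(C)` with `u, e, v` on `C` in clockwise order (normalized: `u = C.f 0`,
`e = s(C.f a, C.f (a+1))`, `v = C.f b` with `a + 1 ≤ b < m`).  Let `(G₁, G₂)` be a
2-separation of `G` with `V(G₁ ∩ G₂) = {x, y}` where `x = C.f p ∈ V(eCv)`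
(`a + 1 ≤ p ≤ b`) and `y = C.f r ∈ V(uCe)` (`r ≤ a`), `{u, v} ⊆ V(G₁)`,
`e ∈ E(G₂)`, `xCy ⊆ G₁` (clockwise indices `p, …, m + r`) and `yCx ⊆ G₂`
(indices `r, …, p`).  Let `G₁' = G₁ + xy` with outer cycle `C₁ = xCy + yx`
(any oriented cycle tracing `C.f p, …, C.f (m + r)`), let `G₂' = G₂ + xy` with
outer cycle `C₂ = yCx + xy` (tracing `C.f r, …, C.f p`), and let `e₁ = xy`.
Then `τ_{G₁'}(e₁v) + τ_{G₂'}(ex) ≤ τ_G(ev) + 2/3` and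
`τ_{G₁'}(ue₁) + τ_{G₂'}(ye) ≤ τ_G(ue) + 2/3`.
(In the chosen enumerations: on `C₁`, the vertex `x` has index `0`, `v` has index
`b − p`, `u` has index `m − p`, `y` has index `m − p + r`, and `e₁` is the closing
edge; on `C₂`, `y` has index `0`, `e` spans indices `a − r, a − r + 1`, `x` has
index `p − r`, and `e₁ = xy` is the closing edge.) -/
theorem tau_inequalities_of_two_separation
    {V : Type} [Fintype V] [DecidableEq V] (G : SimpleGraph V)
    {m : ℕ} (C : OrientedCycle G m) (hGC : IsCircuitGraph G C)
    (a b : ℕ) (hab : a + 1 ≤ b) (hbm : b < m)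
    (p r : ℕ) (hp₁ : a + 1 ≤ p) (hp₂ : p ≤ b) (hr : r ≤ a)
    (G₁ G₂ : G.Subgraph) (hsep : IsKSeparation G 2 G₁ G₂)
    (hxy : G₁.verts ∩ G₂.verts = {C.f (p : ZMod m), C.f (r : ZMod m)})
    (huG₁ : C.f 0 ∈ G₁.verts) (hvG₁ : C.f (b : ZMod m) ∈ G₁.verts)
    (heG₂ : s(C.f (a : ZMod m), C.f ((a : ZMod m) + 1)) ∈ G₂.edgeSet)
    (hxCy_v : ∀ k : ℕ, p ≤ k → k ≤ m + r → C.f (k : ZMod m) ∈ G₁.verts)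
    (hxCy_e : ∀ k : ℕ, p ≤ k → k < m + r →
      G₁.Adj (C.f (k : ZMod m)) (C.f ((k : ZMod m) + 1)))
    (hyCx_v : ∀ k : ℕ, r ≤ k → k ≤ p → C.f (k : ZMod m) ∈ G₂.verts)
    (hyCx_e : ∀ k : ℕ, r ≤ k → k < p →
      G₂.Adj (C.f (k : ZMod m)) (C.f ((k : ZMod m) + 1))) :
    ∀ C₁ : OrientedCycle
        (G₁.coe ⊔ SimpleGraph.fromEdgeSet
          {e' : Sym2 G₁.verts |
            Sym2.map (Subtype.val) e' = s(C.f (p : ZMod m), C.f (r : ZMod m))})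
        (m - p + r + 1),
      (∀ i : ZMod (m - p + r + 1), ((C₁.f i : V) = C.f ((p + i.val : ℕ) : ZMod m))) →
    ∀ C₂ : OrientedCycle
        (G₂.coe ⊔ SimpleGraph.fromEdgeSet
          {e' : Sym2 G₂.verts |
            Sym2.map (Subtype.val) e' = s(C.f (p : ZMod m), C.f (r : ZMod m))})
        (p - r + 1),
      (∀ i : ZMod (p - r + 1), ((C₂.f i : V) = C.f ((r + i.val : ℕ) : ZMod m))) →
      tauVE _ C₁ 0 (b - p) + tauVE _ C₂ (a - r + 1) (p - r)
          ≤ tauVE G C (a + 1) b + 2/3 ∧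
      tauVE _ C₁ (m - p) (m - p + r) + tauVE _ C₂ 0 (a - r)
          ≤ tauVE G C 0 a + 2/3 :=
  tau_inequalities_of_two_separation_general G C a b hbm p r hp₁ hp₂ hr G₁ G₂ hsep hxy

end Paper
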